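/- Let ã, r̃, p̃ be real numbers with 0 < ã < 1, r̃ > 1, and ã/r̃ < p̃ ≤ 1. For q ∈ (0,1], set r*(q) = max( ã/(p̃·q), r̃ ). Define ε(q) = log( 2p̃(1−q) / ( √((1−p̃)² + 4p̃(1−q)(1/r*(q) − p̃·q)) − (1−p̃) ) ) for q ∈ (0,1) with p̃·q < 1/r*(q), and ε(1) = log( (1−p̃)/(1/r*(1) − p̃) ) when p̃ < 1/r*(1). Let M = log( 2(p̃·r̃ − ã) / ( √(r̃²(1−p̃)² + 4(p̃·r̃ − ã)(1 − ã)) − r̃(1−p̃) ) ). Then ε(q) ≥ M for every q ∈ (0,1] with p̃·q < 1/r*(q), and ε(ã/(p̃·r̃)) = M. -/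

import Mathlib

set_option maxHeartbeats 1000000


/-- The privacy-budget threshold `ε_i(p̃, q)` under the risk profile
`r*(p̃,q) = max{ã/(p̃·q), r̃}`. -/
noncomputable def epsThreshold15 (a r p q : ℝ) : ℝ :=
  if q < 1 then
    Real.log (2 * p * (1 - q) /
      (Real.sqrt ((1 - p) ^ 2 + 4 * p * (1 - q) * (1 / max (a / (p * q)) r - p * q)) - (1 - p)))
  else
    Real.log ((1 - p) / (1 / max (a / (p * q)) r - p))

/-- If `m` is below the positive root of `c x² - B x - C`, then `m ≤ (√(B²+4Cc)+B)/(2c)`. -/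
lemma root_lower15 {c m B C : ℝ} (hc : 0 < c) (hB : 0 ≤ B) (hC : 0 ≤ C)
    (h : c * m ^ 2 ≤ B * m + C) :
    m ≤ (Real.sqrt (B ^ 2 + 4 * C * c) + B) / (2 * c) := by
  rw [le_div_iff₀ (by linarith : (0:ℝ) < 2 * c)]
  have hs : 2 * c * m - B ≤ Real.sqrt (B ^ 2 + 4 * C * c) := by
    rcases le_or_gt (2 * c * m - B) 0 with h0 | h0
    · exact le_trans h0 (Real.sqrt_nonneg _)
    · apply Real.le_sqrt_of_sq_le
      nlinarith
  linarith

lemma ratio_eq15 {B C c : ℝ} (hc : 0 < c) (hB : 0 ≤ B) (hC : 0 < C) :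
    2 * C / (Real.sqrt (B ^ 2 + 4 * C * c) - B) =
      (Real.sqrt (B ^ 2 + 4 * C * c) + B) / (2 * c) := by
  have hnn : (0:ℝ) ≤ B ^ 2 + 4 * C * c := by positivity
  have hs2 := Real.sq_sqrt hnn
  have hs0 := Real.sqrt_nonneg (B ^ 2 + 4 * C * c)
  set s := Real.sqrt (B ^ 2 + 4 * C * c) with hs
  have hsB : B < s := by nlinarith
  rw [div_eq_div_iff (by linarith) (by linarith)]
  nlinarith

theorem stmt_15 (a r p : ℝ) (ha0 : 0 < a) (ha1 : a < 1) (hr : 1 < r)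
    (hp1 : a / r < p) (hp2 : p ≤ 1) :
    (∀ q : ℝ, 0 < q → q ≤ 1 → p * q < 1 / max (a / (p * q)) r →
      Real.log (2 * (p * r - a) /
        (Real.sqrt (r ^ 2 * (1 - p) ^ 2 + 4 * (p * r - a) * (1 - a)) - r * (1 - p)))
        ≤ epsThreshold15 a r p q) ∧
    epsThreshold15 a r p (a / (p * r)) =
      Real.log (2 * (p * r - a) /
        (Real.sqrt (r ^ 2 * (1 - p) ^ 2 + 4 * (p * r - a) * (1 - a)) - r * (1 - p))) := by
  have hr0 : (0:ℝ) < r := by linarith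
  have hp0 : 0 < p := lt_trans (div_pos ha0 hr0) hp1
  have hpra : a < p * r := (div_lt_iff₀ hr0).mp hp1
  have hSnn : (0:ℝ) ≤ r ^ 2 * (1 - p) ^ 2 + 4 * (p * r - a) * (1 - a) := by nlinarith
  have hs2 := Real.sq_sqrt hSnn
  have hs0 := Real.sqrt_nonneg (r ^ 2 * (1 - p) ^ 2 + 4 * (p * r - a) * (1 - a))
  set s := Real.sqrt (r ^ 2 * (1 - p) ^ 2 + 4 * (p * r - a) * (1 - a)) with hs
  have h1p : (0:ℝ) ≤ 1 - p := by linarith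
  have hst : r * (1 - p) < s := by nlinarith
  set m : ℝ := (s + r * (1 - p)) / (2 * (1 - a)) with hm
  have ha1' : (0:ℝ) < 1 - a := by linarith
  have hmkey : (1 - a) * m ^ 2 = r * (1 - p) * m + (p * r - a) := by
    have h2 : m * (2 * (1 - a)) = s + r * (1 - p) := by
      rw [hm]; field_simp
    nlinarith [h2]
  have hm1 : 1 ≤ m := by
    rw [hm, le_div_iff₀ (by linarith : (0:ℝ) < 2 * (1 - a))]
    nlinarith [sq_nonneg (s + r * (1 - p) - 2 * (1 - a))]
  have hm0 : 0 < m := by linarith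
  have hMeq : 2 * (p * r - a) / (s - r * (1 - p)) = m := by
    rw [hm, div_eq_div_iff (by linarith : s - r * (1 - p) ≠ 0) (by positivity : 2 * (1 - a) ≠ 0)]
    nlinarith
  clear_value s m
  constructor
  · intro q hq0 hq1 hq3
    set cc : ℝ := 1 / max (a / (p * q)) r - p * q with hcc
    have hcc0 : 0 < cc := sub_pos.2 hq3
    clear_value cc
    have hpq0 : 0 < p * q := mul_pos hp0 hq0
    -- Key inequality: cc * m² ≤ (1-p) * m + p * (1-q)
    have hkey : cc * m ^ 2 ≤ (1 - p) * m + p * (1 - q) := by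
      rcases le_total (a / (p * q)) r with hcase | hcase
      · -- max = r, q ≥ q*
        have hmax : max (a / (p * q)) r = r := max_eq_right hcase
        have hge : a ≤ r * (p * q) := by
          rw [div_le_iff₀ hpq0] at hcase; linarith [hcase]
        rw [hcc, hmax]
        rw [show 1 / r - p * q = (1 - r * (p * q)) / r by field_simp, div_mul_eq_mul_div,
          div_le_iff₀ hr0]
        have hprod : (0:ℝ) ≤ (r * (p * q) - a) * (m ^ 2 - 1) :=
          mul_nonneg (by linarith) (by nlinarith)
        linarith [hmkey, hprod]
      · -- max = a/(pq), q ≤ q*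
        have hmax : max (a / (p * q)) r = a / (p * q) := max_eq_left hcase
        have hle : r * (p * q) ≤ a := by
          rw [le_div_iff₀ hpq0] at hcase; linarith [hcase]
        rw [hcc, hmax, one_div_div]
        rw [show p * q / a - p * q = (p * q * (1 - a)) / a by field_simp,
          div_mul_eq_mul_div, div_le_iff₀ ha0]
        have key2 : (0:ℝ) ≤ ((1 - a) * m ^ 2 + a) * (a - r * (p * q)) :=
          mul_nonneg (by nlinarith) (by linarith)
        have h3 : r * (p * q) * ((1 - a) * m ^ 2) = r * (p * q) * (r * (1 - p) * m + (p * r - a)) := by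
          rw [hmkey]
        have h4 : a * ((1 - a) * m ^ 2) = a * (r * (1 - p) * m + (p * r - a)) := by
          rw [hmkey]
        have hmul : r * (p * q * (1 - a) * m ^ 2) ≤ r * (((1 - p) * m + p * (1 - q)) * a) := by
          linarith [key2, h3, h4]
        exact le_of_mul_le_mul_left hmul hr0
    have hroot : m ≤ (Real.sqrt ((1 - p) ^ 2 + 4 * (p * (1 - q)) * cc) + (1 - p)) / (2 * cc) :=
      root_lower15 hcc0 h1p (by nlinarith : (0:ℝ) ≤ p * (1 - q)) hkey
    unfold epsThreshold15
    rw [hMeq]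
    split_ifs with hlt
    · -- q < 1
      have hC : 0 < p * (1 - q) := by nlinarith
      have harg : (1 - p) ^ 2 + 4 * p * (1 - q) * (1 / max (a / (p * q)) r - p * q)
          = (1 - p) ^ 2 + 4 * (p * (1 - q)) * cc := by rw [hcc]; ring
      rw [harg]
      have h2C : 2 * p * (1 - q) = 2 * (p * (1 - q)) := by ring
      rw [h2C, ratio_eq15 hcc0 h1p hC]
      exact Real.log_le_log hm0 hroot
    · -- q = 1
      have hq : q = 1 := le_antisymm hq1 (not_lt.mp hlt)
      subst hq
      have hccX : 1 / max (a / (p * 1)) r - p = cc := by rw [hcc]; ring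
      rw [hccX]
      have harg : (1 - p) / cc =
          (Real.sqrt ((1 - p) ^ 2 + 4 * (p * (1 - 1)) * cc) + (1 - p)) / (2 * cc) := by
        rw [show (1 - p) ^ 2 + 4 * (p * (1 - 1)) * cc = (1 - p) ^ 2 by ring, Real.sqrt_sq h1p]
        rw [div_eq_div_iff hcc0.ne' (by positivity : (2:ℝ) * cc ≠ 0)]
        ring
      rw [harg]
      exact Real.log_le_log hm0 hroot
  · -- equality at q* = a/(p*r)
    have hqstar : a / (p * r) < 1 := by
      rw [div_lt_one (by positivity)]; linarith
    unfold epsThreshold15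
    rw [if_pos hqstar]
    congr 1
    have hpq : p * (a / (p * r)) = a / r := by field_simp
    rw [hpq]
    have hfrac : a / (a / r) = r := by field_simp
    rw [hfrac, max_self]
    have harg : (1 - p) ^ 2 + 4 * p * (1 - a / (p * r)) * (1 / r - a / r)
        = (r ^ 2 * (1 - p) ^ 2 + 4 * (p * r - a) * (1 - a)) / r ^ 2 := by
      field_simp
    rw [harg]
    have hsq : Real.sqrt ((r ^ 2 * (1 - p) ^ 2 + 4 * (p * r - a) * (1 - a)) / r ^ 2)
        = s / r := by
      rw [show (r ^ 2 * (1 - p) ^ 2 + 4 * (p * r - a) * (1 - a)) / r ^ 2 = (s / r) ^ 2 by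
        rw [div_pow, hs2], Real.sqrt_sq (by positivity)]
    rw [hsq]
    have hd1 : (1 - p) < s / r := by rw [lt_div_iff₀ hr0]; linarith
    rw [div_eq_div_iff (by linarith : s / r - (1 - p) ≠ 0) (by linarith : s - r * (1 - p) ≠ 0)]
    field_simp
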